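/- The maximally regular null-faced 4-simplex: let e₁ = (0, −√3, −1, 0), e₂ = (0, √3, −1, 0), e₃ = (0, 0, 2, 0), p₁ = (1, 0, 0, −1), p₂ = (1, 0, 0, 1) in ℝ⁴. Then: (i) these five points are affinely independent; (ii) for each 4-element subset of {e₁,e₂,e₃,p₁,p₂} there exists a nonzero null vector n with η(n, w − w′) = 0 for all w, w′ in the subset (each of the five tetrahedral hyperfaces lies in a null hyperplane); (iii) η(eᵢ−eⱼ, eᵢ−eⱼ) = 12 for i ≠ j, while η(eᵢ−pⱼ, eᵢ−pⱼ) = 4 and η(p₁−p₂, p₁−p₂) = 4, so the simplex has exactly two distinct edge lengths; (iv) the spacetime 4-volume |det(e₂−e₁, e₃−e₁, p₁−e₁, p₂−e₁)| / 4! equals √3/2. -/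

import Mathlib

/-!
Everything reduces to explicit computations with the five vertices. The edge vectors from
`e₁` have determinant `12√3 ≠ 0`, which gives both affine independence and the volume
`12√3 / 4! = √3/2`. For each vertex `i` there is an explicit null vector `nᵢ` such that
`η(nᵢ, ·)` is constant on the four remaining vertices; by linearity `nᵢ` is then
`η`-orthogonal to every edge of the hyperface opposite `i`.
-/

/-- The Minkowski bilinear form on `ℝ⁴` with signature `(-,+,+,+)`. -/
def eta (x y : Fin 4 → ℝ) : ℝ :=
  -(x 0 * y 0) + x 1 * y 1 + x 2 * y 2 + x 3 * y 3

/-- The determinant of the 4×4 matrix with columns `x₁, x₂, x₃, x₄ ∈ ℝ⁴`. -/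
def det4 (x₁ x₂ x₃ x₄ : Fin 4 → ℝ) : ℝ :=
  (Matrix.of fun i j => ![x₁, x₂, x₃, x₄] j i).det

/-- The five vertices `e₁, e₂, e₃, p₁, p₂` of the maximally regular null-faced
4-simplex (with `a = 1`). -/
noncomputable def mrSimplex : Fin 5 → Fin 4 → ℝ :=
  ![![0, -Real.sqrt 3, -1, 0],
    ![0, Real.sqrt 3, -1, 0],
    ![0, 0, 2, 0],
    ![1, 0, 0, -1],
    ![1, 0, 0, 1]]

theorem eta_sub_right (n x y : Fin 4 → ℝ) : eta n (x - y) = eta n x - eta n y := by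
  simp only [eta, Pi.sub_apply]
  ring

theorem affineIndependent_of_det_vsub_ne_zero {K : Type*} [Field K] {n : ℕ}
    (p : Fin (n + 1) → Fin n → K) (h : (Matrix.of fun i j => p j.succ i - p 0 i).det ≠ 0) :
    AffineIndependent K p := by
  rw [affineIndependent_iff_linearIndependent_vsub K p 0,
    ← linearIndependent_equiv (finSuccAboveEquiv 0)]
  exact Matrix.linearIndependent_cols_of_det_ne_zero h

theorem affineIndependent_of_det4_vsub_ne_zero (p : Fin 5 → Fin 4 → ℝ)
    (h : det4 (p 1 - p 0) (p 2 - p 0) (p 3 - p 0) (p 4 - p 0) ≠ 0) :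
    AffineIndependent ℝ p := by
  refine affineIndependent_of_det_vsub_ne_zero p ?_
  convert h using 2
  rw [det4]
  congr 1
  ext i j
  fin_cases j <;> rfl

theorem det4_mrSimplex_vsub :
    det4 (mrSimplex 1 - mrSimplex 0) (mrSimplex 2 - mrSimplex 0)
      (mrSimplex 3 - mrSimplex 0) (mrSimplex 4 - mrSimplex 0) = 12 * Real.sqrt 3 := by
  rw [det4, Matrix.det_succ_row_zero]
  simp [Fin.sum_univ_succ, Matrix.det_fin_three, mrSimplex, Fin.succAbove]
  ring

noncomputable def faceNormal : Fin 5 → Fin 4 → ℝ :=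
  ![![-2, Real.sqrt 3, 1, 0],
    ![-2, -Real.sqrt 3, 1, 0],
    ![1, 0, 1, 0],
    ![1, 0, 0, 1],
    ![1, 0, 0, -1]]

theorem faceNormal_ne_zero (i : Fin 5) : faceNormal i ≠ 0 := by
  intro h
  have := congr_fun h 0
  fin_cases i <;> norm_num [faceNormal] at this

theorem eta_faceNormal_self (i : Fin 5) : eta (faceNormal i) (faceNormal i) = 0 := by
  fin_cases i <;> simp [eta, faceNormal, Matrix.cons_val] <;> norm_num

theorem eta_faceNormal_mrSimplex {i j : Fin 5} (hj : j ≠ i) :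
    eta (faceNormal i) (mrSimplex j) = ![2, 2, -1, 0, 0] i := by
  fin_cases i <;> fin_cases j <;>
    simp [eta, faceNormal, mrSimplex, Matrix.cons_val] at hj ⊢ <;> norm_num

theorem eta_mrSimplex_sub_self (i j : Fin 5) :
    eta (mrSimplex i - mrSimplex j) (mrSimplex i - mrSimplex j) =
      if i = j then 0 else if i.val < 3 ∧ j.val < 3 then 12 else 4 := by
  fin_cases i <;> fin_cases j <;> simp [eta, mrSimplex, Matrix.cons_val] <;> ring_nf <;> norm_num

/-- The maximally regular null-faced 4-simplex: its five vertices are affinely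
independent; each of its five tetrahedral hyperfaces lies in a null hyperplane;
it has exactly two distinct squared edge lengths (`12` for `(ee)` edges, `4`
for `(ep)` and `(pp)` edges); and its spacetime 4-volume is `√3/2`. -/
theorem maximally_regular_null_simplex :
    AffineIndependent ℝ mrSimplex ∧
    (∀ i : Fin 5, ∃ n : Fin 4 → ℝ, n ≠ 0 ∧ eta n n = 0 ∧
      ∀ j k : Fin 5, j ≠ i → k ≠ i →
        eta n (mrSimplex j - mrSimplex k) = 0) ∧
    (∀ i j : Fin 5, i ≠ j → i.val < 3 → j.val < 3 →
      eta (mrSimplex i - mrSimplex j) (mrSimplex i - mrSimplex j) = 12) ∧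
    (∀ i j : Fin 5, i.val < 3 → 3 ≤ j.val →
      eta (mrSimplex i - mrSimplex j) (mrSimplex i - mrSimplex j) = 4) ∧
    eta (mrSimplex 3 - mrSimplex 4) (mrSimplex 3 - mrSimplex 4) = 4 ∧
    |det4 (mrSimplex 1 - mrSimplex 0) (mrSimplex 2 - mrSimplex 0)
        (mrSimplex 3 - mrSimplex 0) (mrSimplex 4 - mrSimplex 0)| / 24 =
      Real.sqrt 3 / 2 := by
  refine ⟨affineIndependent_of_det4_vsub_ne_zero mrSimplex ?_, fun i => ?_, ?_, ?_, ?_, ?_⟩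
  · rw [det4_mrSimplex_vsub]
    positivity
  · refine ⟨faceNormal i, faceNormal_ne_zero i, eta_faceNormal_self i, fun j k hj hk => ?_⟩
    rw [eta_sub_right, eta_faceNormal_mrSimplex hj, eta_faceNormal_mrSimplex hk, sub_self]
  · intro i j hij hi hj
    simp [eta_mrSimplex_sub_self, hij, hi, hj]
  · intro i j hi hj
    have hij : i ≠ j := Fin.ne_of_lt (by omega)
    simp [eta_mrSimplex_sub_self, hij, show ¬j.val < 3 by omega]
  · simp [eta_mrSimplex_sub_self]
  · rw [det4_mrSimplex_vsub, abs_of_pos (by positivity)]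
    ring
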